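/- Fix n ≥ 1, let (α i)_{i : Fin (n*n)} be an orthonormal basis of Mₙ(ℂ) for the Hilbert–Schmidt inner product, and let δ : Mₙ(ℂ) → M_{n·n}(ℂ) be the unique linear map with δ(α i) = (α i) ⊗ₖ (α i), with Hilbert–Schmidt adjoint δ†. If δ is completely positive, then δ†(1) is an invertible matrix, and hence positive definite. -/

import Mathlib

open Matrix Kronecker ComplexOrder

noncomputable section

/-- The Hilbert-Schmidt inner product `⟨a, b⟩ = Tr(aᴴ b)` on square matrices. -/
def hsInner {m : Type*} [Fintype m] (a b : Matrix m m ℂ) : ℂ :=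
  (aᴴ * b).trace

/-- The amplification `id ⊗ Φ` of a linear map `Φ` between matrix algebras,
acting blockwise on matrices indexed by `Fin k × p`. -/
def amplify {p q : Type*} [Fintype p] [Fintype q]
    (Φ : Matrix p p ℂ →ₗ[ℂ] Matrix q q ℂ) (k : ℕ)
    (M : Matrix (Fin k × p) (Fin k × p) ℂ) :
    Matrix (Fin k × q) (Fin k × q) ℂ :=
  Matrix.of fun i j => Φ (Matrix.of fun a b => M (i.1, a) (j.1, b)) i.2 j.2

/-- A linear map between matrix algebras is completely positive if all its
amplifications send positive semidefinite matrices to positive semidefinite matrices. -/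
def IsCompletelyPositive {p q : Type*} [Fintype p] [Fintype q]
    (Φ : Matrix p p ℂ →ₗ[ℂ] Matrix q q ℂ) : Prop :=
  ∀ (k : ℕ) (M : Matrix (Fin k × p) (Fin k × p) ℂ),
    M.PosSemidef → (amplify Φ k M).PosSemidef

/-! `δ` sends the orthonormal basis `α i` to the orthonormal family `α i ⊗ₖ α i`, so it is an
isometry: `δ† ∘ δ = id`, and `δ` is injective. For a vector `v`,
`⟨v, δ†(1) v⟩ = ⟨δ(v v*), 1⟩ = Tr δ(v v*)` is the trace of a positive semidefinite matrix
(complete positivity at level one), and it vanishes only when `δ(v v*) = 0`, i.e. `v = 0`. -/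

lemma Matrix.isHermitian_of_forall_dotProduct_mulVec_nonneg {m : Type*} [Fintype m]
    [DecidableEq m] {A : Matrix m m ℂ} (h : ∀ x : m → ℂ, 0 ≤ star x ⬝ᵥ A *ᵥ x) :
    A.IsHermitian := by
  rw [← isSymmetric_toEuclideanLin_iff, LinearMap.isSymmetric_iff_inner_map_self_real]
  intro v
  have hreal := (Complex.nonneg_iff.mp (h v.ofLp)).2
  have hinner : inner ℂ (A.toEuclideanLin v) v = star (star v.ofLp ⬝ᵥ A *ᵥ v.ofLp) := by
    rw [EuclideanSpace.inner_eq_star_dotProduct, star_dotProduct, star_star, dotProduct_comm]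
    rfl
  rw [Complex.conj_eq_iff_im, hinner]
  simp [← hreal]

lemma hsInner_kronecker {m : Type*} [Fintype m] (a b c d : Matrix m m ℂ) :
    hsInner (a ⊗ₖ b) (c ⊗ₖ d) = hsInner a c * hsInner b d := by
  rw [hsInner, hsInner, hsInner, conjTranspose_kronecker, ← mul_kronecker_mul, trace_kronecker]

lemma star_hsInner {m : Type*} [Fintype m] (a b : Matrix m m ℂ) :
    star (hsInner a b) = hsInner b a := by
  rw [hsInner, hsInner, ← trace_conjTranspose, conjTranspose_mul, conjTranspose_conjTranspose]

lemma hsInner_sub_right {m : Type*} [Fintype m] (a b c : Matrix m m ℂ) :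
    hsInner a (b - c) = hsInner a b - hsInner a c := by
  rw [hsInner, hsInner, hsInner, Matrix.mul_sub, trace_sub]

lemma star_dotProduct_mulVec_eq_hsInner {m : Type*} [Fintype m] (v : m → ℂ)
    (a : Matrix m m ℂ) : star v ⬝ᵥ a *ᵥ v = hsInner (vecMulVec v (star v)) a := by
  rw [hsInner, conjTranspose_vecMulVec, star_star, vecMulVec_mul, trace_vecMulVec]
  exact (dotProduct_mulVec _ _ _).trans (dotProduct_comm _ _)

lemma eq_zero_of_forall_hsInner_eq_zero {m ι : Type*} [Fintype m] {α : ι → Matrix m m ℂ}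
    (hspan : Submodule.span ℂ (Set.range α) = ⊤) {d : Matrix m m ℂ}
    (h : ∀ i, hsInner (α i) d = 0) : d = 0 := by
  let f : Matrix m m ℂ →ₗ[ℂ] ℂ := traceLinearMap m ℂ ℂ ∘ₗ LinearMap.mulLeft ℂ dᴴ
  have hf : f = 0 := LinearMap.ext_on_range hspan fun i => by
    change hsInner d (α i) = 0
    rw [← star_hsInner, h i, star_zero]
  exact trace_conjTranspose_mul_self_eq_zero_iff.mp (LinearMap.congr_fun hf d)

lemma IsCompletelyPositive.posSemidef_apply {p q : Type*} [Fintype p] [Fintype q]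
    {Φ : Matrix p p ℂ →ₗ[ℂ] Matrix q q ℂ} (hΦ : IsCompletelyPositive Φ)
    {X : Matrix p p ℂ} (hX : X.PosSemidef) : (Φ X).PosSemidef := by
  convert (hΦ 1 _ (hX.submatrix (Equiv.uniqueProd p (Fin 1)))).submatrix
    (Equiv.uniqueProd q (Fin 1)).symm using 1
  ext i j
  rfl

section HSAdjoint

variable {p q : Type*} [Fintype p] [Fintype q]
  {Φ : Matrix p p ℂ →ₗ[ℂ] Matrix q q ℂ} {Ψ : Matrix q q ℂ →ₗ[ℂ] Matrix p p ℂ}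

lemma leftInverse_of_adjoint_of_isometry {ι : Type*} {α : ι → Matrix p p ℂ}
    (hspan : Submodule.span ℂ (Set.range α) = ⊤)
    (hadj : ∀ a b, hsInner (Φ a) b = hsInner a (Ψ b))
    (hiso : ∀ i j, hsInner (Φ (α i)) (Φ (α j)) = hsInner (α i) (α j)) :
    Function.LeftInverse Ψ Φ := by
  have hcomp : Ψ ∘ₗ Φ = LinearMap.id := LinearMap.ext_on_range hspan fun j =>
    sub_eq_zero.mp <| eq_zero_of_forall_hsInner_eq_zero hspan fun i => by
      rw [hsInner_sub_right, LinearMap.comp_apply, ← hadj, hiso, LinearMap.id_apply, sub_self]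
  exact LinearMap.congr_fun hcomp

lemma posDef_adjoint_one_of_injective [DecidableEq p] [DecidableEq q]
    (hadj : ∀ a b, hsInner (Φ a) b = hsInner a (Ψ b))
    (hpos : ∀ X, X.PosSemidef → (Φ X).PosSemidef) (hinj : Function.Injective Φ) :
    (Ψ 1).PosDef := by
  have hquad (v : p → ℂ) : star v ⬝ᵥ Ψ 1 *ᵥ v = (Φ (vecMulVec v (star v))).trace := by
    rw [star_dotProduct_mulVec_eq_hsInner, ← hadj, hsInner, Matrix.mul_one,
      (hpos _ (posSemidef_vecMulVec_self_star v)).isHermitian.eq]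
  have hnonneg (v : p → ℂ) : 0 ≤ star v ⬝ᵥ Ψ 1 *ᵥ v :=
    hquad v ▸ (hpos _ (posSemidef_vecMulVec_self_star v)).trace_nonneg
  refine .of_dotProduct_mulVec_pos (isHermitian_of_forall_dotProduct_mulVec_nonneg hnonneg)
    fun v hv => (hnonneg v).lt_of_ne fun h => hv ?_
  rw [hquad, eq_comm, (hpos _ (posSemidef_vecMulVec_self_star v)).trace_eq_zero_iff,
    ← map_zero Φ, hinj.eq_iff, vecMulVec_eq_zero] at h
  exact h.resolve_right (star_eq_zero.not.mpr hv)

end HSAdjoint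

theorem stmt_9_general (n : ℕ)
    (α : Fin (n * n) → Matrix (Fin n) (Fin n) ℂ)
    (horth : ∀ i j, hsInner (α i) (α j) = if i = j then 1 else 0)
    (hspan : Submodule.span ℂ (Set.range α) = ⊤)
    (δ : Matrix (Fin n) (Fin n) ℂ →ₗ[ℂ] Matrix (Fin n × Fin n) (Fin n × Fin n) ℂ)
    (hδ : ∀ i, δ (α i) = α i ⊗ₖ α i)
    (δd : Matrix (Fin n × Fin n) (Fin n × Fin n) ℂ →ₗ[ℂ] Matrix (Fin n) (Fin n) ℂ)
    (hadj : ∀ a b, hsInner (δ a) b = hsInner a (δd b))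
    (hCP : IsCompletelyPositive δ) :
    IsUnit (δd 1) ∧ (δd 1).PosDef := by
  have hiso (i j) : hsInner (δ (α i)) (δ (α j)) = hsInner (α i) (α j) := by
    rw [hδ, hδ, hsInner_kronecker, horth]
    split_ifs <;> simp
  have hinj : Function.Injective δ := (leftInverse_of_adjoint_of_isometry hspan hadj hiso).injective
  have hA : (δd 1).PosDef :=
    posDef_adjoint_one_of_injective hadj (fun _ => hCP.posSemidef_apply) hinj
  exact ⟨hA.isUnit, hA⟩

/-- If δ is completely positive then δ†(1) is invertible, and hence positive definite. -/
theorem stmt_9 (n : ℕ) (hn : 1 ≤ n)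
    (α : Fin (n * n) → Matrix (Fin n) (Fin n) ℂ)
    (horth : ∀ i j, hsInner (α i) (α j) = if i = j then 1 else 0)
    (hspan : Submodule.span ℂ (Set.range α) = ⊤)
    (δ : Matrix (Fin n) (Fin n) ℂ →ₗ[ℂ] Matrix (Fin n × Fin n) (Fin n × Fin n) ℂ)
    (hδ : ∀ i, δ (α i) = α i ⊗ₖ α i)
    (δd : Matrix (Fin n × Fin n) (Fin n × Fin n) ℂ →ₗ[ℂ] Matrix (Fin n) (Fin n) ℂ)
    (hadj : ∀ a b, hsInner (δ a) b = hsInner a (δd b))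
    (hCP : IsCompletelyPositive δ) :
    IsUnit (δd 1) ∧ (δd 1).PosDef :=
  stmt_9_general n α horth hspan δ hδ δd hadj hCP
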